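/- arXiv:math/0512612 — 2 statements merged into one kernel-verified Lean document; each statement's English description precedes it below -/
import Mathlib

section
/- For every n ≥ 3 with n ≡ 3 (mod 4), the alternating configuration of n pegs can be sorted using exactly ⌊n/2⌋ Berge 1-moves. Specifically, writing n = 4i+3, the sequence of 1-moves given (in destination–source concatenated notation) by {4i+4, 3, 4i+2, 5, 4i, 7, 4i−2, 9, ..., 2i+4, 1} sorts the string; hence h(n,1) = ⌊n/2⌋ for n ≡ 3 (mod 4). -/
/-!
Lower bound: read the pegs left to right and count the last pegs of the maximal monochromatic
runs; this is `disorder`. The alternating configuration of `n` pegs has `n` run ends and a sorted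
one at most two. Erasing a peg destroys at most two run ends (its own and that of the peg before
it) and creates none, so a 1-move, which is an erasure followed by the inverse of an erasure,
lowers `disorder` by at most two. Hence `n ≤ 2 m + 2`, i.e. `m ≥ ⌊n/2⌋` for odd `n`.

Upper bound for `n = 4 i + 3`: each of the `2 i + 1` moves fills the hole left by the previous
one, and the configuration after `t` moves has a closed form.
-/

/-- A board configuration has finite support: only finitely many positions hold pegs. -/
def FinSupp (c : ℤ → Option Bool) : Prop := {p : ℤ | (c p).isSome}.Finite

/-- The disorder: number of pegs `p` such that it is NOT the case that the next peg
to the right of `p` exists and has the same color. -/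
noncomputable def disorder (c : ℤ → Option Bool) : ℕ :=
  Set.ncard {p : ℤ | (c p).isSome ∧
    ¬ ∃ q : ℤ, p < q ∧ c q = c p ∧ ∀ r : ℤ, p < r → r < q → c r = none}

/-- A Berge `k`-move taking the `k` pegs at positions `i, i+1, ..., i+k-1` to the
`k` vacant positions `j, j+1, ..., j+k-1`, preserving order. -/
def MoveTo (k : ℕ) (i j : ℤ) (c c' : ℤ → Option Bool) : Prop :=
  (j + k ≤ i ∨ i + k ≤ j) ∧
  (∀ t : ℤ, 0 ≤ t → t < k → (c (i + t)).isSome ∧ c (j + t) = none) ∧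
  c' = fun p => if j ≤ p ∧ p < j + k then c (i + (p - j))
    else if i ≤ p ∧ p < i + k then none else c p

/-- A Berge `k`-move from some source to some destination. -/
def BergeMove (k : ℕ) (c c' : ℤ → Option Bool) : Prop :=
  ∃ i j : ℤ, MoveTo k i j c c'

/-- The alternating configuration of `n` pegs: pegs at positions `1,...,n`,
white (`true`) at odd positions and black (`false`) at even positions. -/
def altConfig (n : ℕ) : ℤ → Option Bool :=
  fun p => if 1 ≤ p ∧ p ≤ (n : ℤ) then some (decide (p % 2 = 1)) else none

/-- A sorted configuration of `n` pegs: a contiguous block of `n` pegs, the first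
`⌈n/2⌉` of one color, followed by the remaining `⌊n/2⌋` of the other color. -/
def IsSorted (n : ℕ) (c : ℤ → Option Bool) : Prop :=
  ∃ j : ℤ, ∃ w : Bool,
    (∀ p : ℤ, (c p).isSome ↔ (j ≤ p ∧ p < j + (n : ℤ))) ∧
    (∀ p : ℤ, j ≤ p → p < j + (((n + 1) / 2 : ℕ) : ℤ) → c p = some w) ∧
    (∀ p : ℤ, j + (((n + 1) / 2 : ℕ) : ℤ) ≤ p → p < j + (n : ℤ) → c p = some (!w))

/-- The alternating configuration of `n` pegs can be sorted in `m` Berge `k`-moves. -/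
def SortsIn (k n m : ℕ) : Prop :=
  ∃ f : ℕ → (ℤ → Option Bool), f 0 = altConfig n ∧
    (∀ i < m, BergeMove k (f i) (f (i + 1))) ∧ IsSorted n (f m)

theorem moveTo_one_iff {i j : ℤ} {c c' : ℤ → Option Bool} :
    MoveTo 1 i j c c' ↔ i ≠ j ∧ (c i).isSome ∧ c j = none ∧
      c' = Function.update (Function.update c i none) j (c i) := by
  have hfun : (fun p => if j ≤ p ∧ p < j + ((1 : ℕ) : ℤ) then c (i + (p - j))
      else if i ≤ p ∧ p < i + ((1 : ℕ) : ℤ) then none else c p) =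
      Function.update (Function.update c i none) j (c i) := by
    funext p
    simp only [Function.update_apply, Nat.cast_one]
    split_ifs <;> first | rfl | omega | (congr 1; omega)
  rw [MoveTo, hfun]
  simp only [Nat.cast_one]
  constructor
  · rintro ⟨hsep, hocc, rfl⟩
    simpa using And.intro (by omega : i ≠ j) (hocc 0 le_rfl one_pos)
  · rintro ⟨hij, hi, hj, rfl⟩
    refine ⟨by omega, fun t ht0 ht1 => ?_, rfl⟩
    obtain rfl : t = 0 := by omega
    simpa using ⟨hi, hj⟩

section Disorder

variable {c : ℤ → Option Bool}

def EmptyBetween (c : ℤ → Option Bool) (a b : ℤ) : Prop :=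
  ∀ r, a < r → r < b → c r = none

def NextSameColor (c : ℤ → Option Bool) (p : ℤ) : Prop :=
  ∃ q, p < q ∧ c q = c p ∧ EmptyBetween c p q

def runEnds (c : ℤ → Option Bool) : Set ℤ :=
  {p | (c p).isSome ∧ ¬ NextSameColor c p}

theorem disorder_eq_ncard_runEnds (c : ℤ → Option Bool) :
    disorder c = (runEnds c).ncard := rfl

theorem FinSupp.runEnds_finite (hc : FinSupp c) : (runEnds c).Finite :=
  hc.subset fun _ hp => hp.1

theorem FinSupp.update (hc : FinSupp c) (i : ℤ) (v : Option Bool) :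
    FinSupp (Function.update c i v) := by
  refine (hc.insert i).subset fun p hp => ?_
  by_cases hpi : p = i
  · exact Or.inl hpi
  · exact Or.inr (by simpa [Function.update_of_ne hpi] using hp)

def prevPeg (c : ℤ → Option Bool) (i : ℤ) : Set ℤ :=
  {p | (c p).isSome ∧ p < i ∧ EmptyBetween c p i}

theorem subsingleton_prevPeg (c : ℤ → Option Bool) (i : ℤ) : (prevPeg c i).Subsingleton := by
  intro a ⟨ha, hai, hgap_a⟩ b ⟨hb, hbi, hgap_b⟩
  by_contra hne
  rcases lt_or_gt_of_ne hne with hab | hba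
  · simp [hgap_a b hab hbi] at hb
  · simp [hgap_b a hba hai] at ha

theorem EmptyBetween.mono_right {a b b' : ℤ} (h : EmptyBetween c a b) (hb : b' ≤ b) :
    EmptyBetween c a b' :=
  fun r har hrb => h r har (lt_of_lt_of_le hrb hb)

theorem EmptyBetween.update_none {a b : ℤ} (h : EmptyBetween c a b) (i : ℤ) :
    EmptyBetween (Function.update c i none) a b := by
  intro r har hrb
  by_cases hri : r = i
  · rw [hri, Function.update_self]
  · rw [Function.update_of_ne hri, h r har hrb]

theorem EmptyBetween.of_update_none {a b i : ℤ}
    (h : EmptyBetween (Function.update c i none) a b) (hi : ¬ (a < i ∧ i < b)) :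
    EmptyBetween c a b := by
  intro r har hrb
  have hri : r ≠ i := by rintro rfl; exact hi ⟨har, hrb⟩
  simpa [Function.update_of_ne hri] using h r har hrb

theorem runEnds_subset_update_none (c : ℤ → Option Bool) (i : ℤ) :
    runEnds c ⊆ insert i (runEnds (Function.update c i none) ∪ prevPeg c i) := by
  rintro p ⟨hp, hp_end⟩
  by_cases hpi : p = i
  · exact Or.inl hpi
  refine Or.inr (or_iff_not_imp_left.2 fun hp_erased => ?_)
  have hcp : Function.update c i none p = c p := Function.update_of_ne hpi _ _
  obtain ⟨q, hpq, hq, hgap⟩ : NextSameColor (Function.update c i none) p := by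
    by_contra h
    exact hp_erased ⟨hcp ▸ hp, h⟩
  have hqi : q ≠ i := by
    rintro rfl
    simp [hcp, Option.isSome_iff_ne_none] at hq hp
    exact hp hq.symm
  rw [hcp, Function.update_of_ne hqi] at hq
  by_cases hi : p < i ∧ i < q
  · exact ⟨hp, hi.1, (hgap.mono_right hi.2.le).of_update_none (by omega)⟩
  · exact absurd ⟨q, hpq, hq, hgap.of_update_none hi⟩ hp_end

theorem prevPeg_and_mem_runEnds_of_update_none {i p : ℤ} (hi : (c i).isSome)
    (hp : p ∈ runEnds (Function.update c i none)) (hp' : p ∉ runEnds c) :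
    p ∈ prevPeg c i ∧ i ∈ runEnds c := by
  obtain ⟨hp_some, hp_end⟩ := hp
  have hpi : p ≠ i := by rintro rfl; simp at hp_some
  have hcp : Function.update c i none p = c p := Function.update_of_ne hpi _ _
  rw [hcp] at hp_some
  obtain ⟨q, hpq, hq, hgap⟩ : NextSameColor c p := by
    by_contra h
    exact hp' ⟨hp_some, h⟩
  by_cases hqi : q = i
  · subst hqi
    refine ⟨⟨hp_some, hpq, hgap⟩, hi, fun ⟨q', hqq', hq', hgap'⟩ => hp_end ?_⟩
    refine ⟨q', hpq.trans hqq', ?_, fun r hpr hrq' => ?_⟩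
    · rw [hcp, Function.update_of_ne hqq'.ne', hq', hq]
    · rcases lt_trichotomy r q with hrq | rfl | hqr
      · exact (hgap.update_none q) r hpr hrq
      · exact Function.update_self _ _ _
      · exact (hgap'.update_none q) r hqr hrq'
  · refine absurd ⟨q, hpq, ?_, fun r hpr hrq => (hgap.update_none i) r hpr hrq⟩ hp_end
    rw [hcp, Function.update_of_ne hqi, hq]

theorem disorder_update_none_le (hc : FinSupp c) {i : ℤ} (hi : (c i).isSome) :
    disorder (Function.update c i none) ≤ disorder c := by
  classical
  rw [disorder_eq_ncard_runEnds, disorder_eq_ncard_runEnds]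
  refine Set.ncard_le_ncard_of_injOn (fun p => if p ∈ runEnds c then p else i) ?_ ?_
    hc.runEnds_finite
  · intro p hp
    by_cases h : p ∈ runEnds c
    · simp [h]
    · simpa [h] using (prevPeg_and_mem_runEnds_of_update_none hi hp h).2
  · intro a ha b hb hab
    by_cases hac : a ∈ runEnds c <;> by_cases hbc : b ∈ runEnds c <;>
      simp only [hac, hbc, if_true, if_false] at hab
    · exact hab
    · simp [hab, runEnds] at ha
    · simp [← hab, runEnds] at hb
    · exact subsingleton_prevPeg c i (prevPeg_and_mem_runEnds_of_update_none hi ha hac).1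
        (prevPeg_and_mem_runEnds_of_update_none hi hb hbc).1

theorem disorder_le_update_none_add_two (hc : FinSupp c) (i : ℤ) :
    disorder c ≤ disorder (Function.update c i none) + 2 := by
  rw [disorder_eq_ncard_runEnds, disorder_eq_ncard_runEnds]
  have hprev := subsingleton_prevPeg c i
  have : Finite (prevPeg c i) := hprev.finite.to_subtype
  calc (runEnds c).ncard
      ≤ (insert i (runEnds (Function.update c i none) ∪ prevPeg c i)).ncard :=
        Set.ncard_le_ncard (runEnds_subset_update_none c i)
          (((hc.update i none).runEnds_finite.union hprev.finite).insert i)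
    _ ≤ (runEnds (Function.update c i none) ∪ prevPeg c i).ncard + 1 := Set.ncard_insert_le _ _
    _ ≤ (runEnds (Function.update c i none)).ncard + (prevPeg c i).ncard + 1 := by
        gcongr; exact Set.ncard_union_le _ _
    _ ≤ (runEnds (Function.update c i none)).ncard + 2 := by
        have := Set.ncard_le_one_iff_subsingleton.2 hprev
        omega

end Disorder

section LowerBound

variable {c c' : ℤ → Option Bool}

theorem FinSupp.of_bergeMove_one (hc : FinSupp c) (h : BergeMove 1 c c') : FinSupp c' := by
  obtain ⟨i, j, hm⟩ := h
  obtain ⟨-, -, -, rfl⟩ := moveTo_one_iff.1 hm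
  exact (hc.update i none).update j (c i)

/-- A 1-move is an erasure followed by the inverse of an erasure. -/
theorem disorder_le_add_two_of_bergeMove_one (hc : FinSupp c) (h : BergeMove 1 c c') :
    disorder c ≤ disorder c' + 2 := by
  have hc' := hc.of_bergeMove_one h
  obtain ⟨i, j, hm⟩ := h
  obtain ⟨hij, hi, hj, rfl⟩ := moveTo_one_iff.1 hm
  have herase : Function.update (Function.update (Function.update c i none) j (c i)) j none =
      Function.update c i none := by
    rw [Function.update_idem, Function.update_eq_self_iff, Function.update_of_ne hij.symm, hj]
  have hback := disorder_update_none_le hc' (i := j) (by simpa using hi)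
  rw [herase] at hback
  have := disorder_le_update_none_add_two hc i
  omega

theorem finSupp_and_disorder_le_of_chain {f : ℕ → ℤ → Option Bool} {m : ℕ}
    (h0 : FinSupp (f 0)) (hmove : ∀ k < m, BergeMove 1 (f k) (f (k + 1))) :
    FinSupp (f m) ∧ disorder (f 0) ≤ disorder (f m) + 2 * m := by
  induction m with
  | zero => exact ⟨h0, le_refl _⟩
  | succ m ih =>
    obtain ⟨hfin, hle⟩ := ih fun k hk => hmove k (by omega)
    have hstep := disorder_le_add_two_of_bergeMove_one hfin (hmove m (by omega))
    exact ⟨hfin.of_bergeMove_one (hmove m (by omega)), by omega⟩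

theorem finSupp_altConfig (n : ℕ) : FinSupp (altConfig n) :=
  (Set.finite_Icc (1 : ℤ) n).subset fun p hp => by simpa [altConfig] using hp

theorem runEnds_altConfig (n : ℕ) : runEnds (altConfig n) = Set.Icc 1 (n : ℤ) := by
  ext p
  simp only [runEnds, NextSameColor, EmptyBetween, altConfig, Set.mem_Icc]
  constructor
  · rintro ⟨hp, -⟩
    by_contra h
    simp [if_neg h] at hp
  · rintro hp
    refine ⟨by simp [if_pos hp], fun ⟨q, hpq, hq, hgap⟩ => ?_⟩
    rw [if_pos hp] at hq
    by_cases hq_range : 1 ≤ q ∧ q ≤ (n : ℤ)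
    · rw [if_pos hq_range, Option.some.injEq, decide_eq_decide] at hq
      have := hgap (p + 1) (by omega) (by omega)
      rw [if_pos (by omega)] at this
      simp at this
    · simp [if_neg hq_range] at hq

theorem disorder_altConfig (n : ℕ) : disorder (altConfig n) = n := by
  rw [disorder_eq_ncard_runEnds, runEnds_altConfig, ← Finset.coe_Icc, Set.ncard_coe_finset,
    Int.card_Icc]
  omega

theorem disorder_le_two_of_isSorted {n : ℕ} (h : IsSorted n c) : disorder c ≤ 2 := by
  obtain ⟨j, w, hsupp, hfirst, hsecond⟩ := h
  set k : ℤ := (((n + 1) / 2 : ℕ) : ℤ)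
  have hsub : runEnds c ⊆ {j + k - 1, j + n - 1} := by
    rintro p ⟨hp, hp_end⟩
    have hrange := (hsupp p).1 hp
    by_contra hp_last
    simp only [Set.mem_insert_iff, Set.mem_singleton_iff, not_or] at hp_last
    refine hp_end ⟨p + 1, by omega, ?_, fun r hpr hrp => by omega⟩
    by_cases hpk : p < j + k
    · rw [hfirst p hrange.1 hpk, hfirst (p + 1) (by omega) (by omega)]
    · rw [hsecond p (by omega) hrange.2, hsecond (p + 1) (by omega) (by omega)]
  calc disorder c ≤ ({j + k - 1, j + n - 1} : Set ℤ).ncard :=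
        Set.ncard_le_ncard hsub (Set.toFinite _)
    _ ≤ ({j + n - 1} : Set ℤ).ncard + 1 := Set.ncard_insert_le _ _
    _ = 2 := by rw [Set.ncard_singleton]

theorem le_two_mul_add_two_of_sortsIn_one {n m : ℕ} (h : SortsIn 1 n m) : n ≤ 2 * m + 2 := by
  obtain ⟨f, hf0, hmove, hsorted⟩ := h
  obtain ⟨-, hle⟩ := finSupp_and_disorder_le_of_chain (hf0 ▸ finSupp_altConfig n) hmove
  rw [hf0, disorder_altConfig] at hle
  have := disorder_le_two_of_isSorted hsorted
  omega

end LowerBound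

section UpperBound

def holeConfig (a b h : ℤ) (col : ℤ → Bool) : ℤ → Option Bool :=
  fun p => if a ≤ p ∧ p ≤ b ∧ p ≠ h then some (col p) else none

theorem moveTo_holeConfig {a b h h' : ℤ} {col col' : ℤ → Bool}
    (hh : a ≤ h ∧ h ≤ b) (hh' : a ≤ h' ∧ h' ≤ b) (hne : h' ≠ h) (hcol : col' h = col h')
    (hcol' : ∀ p, a ≤ p → p ≤ b → p ≠ h → p ≠ h' → col' p = col p) :
    MoveTo 1 h' h (holeConfig a b h col) (holeConfig a b h' col') := by
  refine moveTo_one_iff.2 ⟨hne, by simp [holeConfig, hh', hne], by simp [holeConfig], ?_⟩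
  funext p
  by_cases hph : p = h
  · subst hph
    simp [holeConfig, hh, hh', hne, hne.symm, hcol]
  by_cases hph' : p = h'
  · subst hph'
    simp [holeConfig, hph]
  simp only [holeConfig, Function.update_of_ne hph, Function.update_of_ne hph']
  by_cases hp : a ≤ p ∧ p ≤ b
  · simp [hp, hph, hph', hcol' p hp.1 hp.2 hph hph']
  · rw [if_neg (by tauto), if_neg (by tauto)]

/- Move `t` takes the peg at `sortingHole i (t + 1)` to `sortingHole i t`, so the holes
`0, 4i+1, 2, 4i-1, …, 2i, 4i+3` are the paper's sequence `{4i+4, 3, 4i+2, 5, …, 2i+4, 1}`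
reflected by `p ↦ 4i+4-p`: `IsSorted` wants the `⌈n/2⌉` white pegs on the left. -/
def sortingHole (i t : ℕ) : ℤ :=
  if t = 2 * i + 1 then 4 * i + 3 else if t % 2 = 1 then 4 * i + 2 - t else t

/- After `t` moves the positions `≤ t` are white, the odd positions up to `4i+1-t` still carry
their original white pegs, and the white peg at `4i+3` moves only last. -/
def sortingColor (i t : ℕ) (p : ℤ) : Bool :=
  decide (p ≤ t ∨ (p % 2 = 1 ∧ p ≤ 4 * i + 1 - t) ∨ p = 4 * i + 3)

def sortingConfig (i t : ℕ) : ℤ → Option Bool :=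
  holeConfig 0 (4 * i + 3) (sortingHole i t) (sortingColor i t)

theorem moveTo_sortingConfig {i t : ℕ} (ht : t < 2 * i + 1) :
    MoveTo 1 (sortingHole i (t + 1)) (sortingHole i t) (sortingConfig i t)
      (sortingConfig i (t + 1)) := by
  refine moveTo_holeConfig ?_ ?_ ?_ ?_ fun p _ _ hp hp' => ?_ <;>
    simp only [sortingHole, sortingColor] at * <;> push_cast at * <;> split_ifs at * <;>
    (try simp only [decide_eq_decide, or_true, iff_true]) <;> omega

theorem sortingConfig_zero (i : ℕ) : sortingConfig i 0 = altConfig (4 * i + 3) := by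
  funext p
  simp only [sortingConfig, holeConfig, sortingHole, sortingColor, altConfig]
  push_cast
  split_ifs <;> first | rfl | omega | (simp only [Option.some.injEq, decide_eq_decide]; omega)

theorem sortingConfig_last (i : ℕ) (p : ℤ) :
    sortingConfig i (2 * i + 1) p =
      if 0 ≤ p ∧ p ≤ 4 * i + 2 then some (decide (p ≤ 2 * i + 1)) else none := by
  simp only [sortingConfig, holeConfig, sortingHole, sortingColor, if_true]
  push_cast
  split_ifs <;> first | rfl | omega | (simp only [Option.some.injEq, decide_eq_decide]; omega)

theorem isSorted_sortingConfig (i : ℕ) : IsSorted (4 * i + 3) (sortingConfig i (2 * i + 1)) := by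
  refine ⟨0, true, fun p => ?_, fun p hp0 hp => ?_, fun p hp hp3 => ?_⟩ <;>
    rw [sortingConfig_last] <;> push_cast at *
  · split_ifs <;> simp <;> omega
  · rw [if_pos (by omega), Option.some.injEq, decide_eq_true_eq]
    omega
  · rw [if_pos (by omega), Option.some.injEq, Bool.not_true, decide_eq_false_iff_not]
    omega

theorem sortsIn_one_four_mul_add_three (i : ℕ) : SortsIn 1 (4 * i + 3) (2 * i + 1) :=
  ⟨sortingConfig i, sortingConfig_zero i, fun _ ht => ⟨_, _, moveTo_sortingConfig ht⟩,
    isSorted_sortingConfig i⟩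

end UpperBound

theorem h_one_moves_eq_floor_general (n : ℕ) (hmod : n % 4 = 3) :
    IsLeast {m : ℕ | SortsIn 1 n m} (n / 2) := by
  obtain ⟨i, rfl⟩ : ∃ i, n = 4 * i + 3 := ⟨n / 4, by omega⟩
  refine ⟨?_, fun m hm => ?_⟩
  · rw [show (4 * i + 3) / 2 = 2 * i + 1 by omega]
    exact sortsIn_one_four_mul_add_three i
  · have := le_two_mul_add_two_of_sortsIn_one hm
    omega

theorem h_one_moves_eq_floor (n : ℕ) (hn : 3 ≤ n) (hmod : n % 4 = 3) :
    IsLeast {m : ℕ | SortsIn 1 n m} (n / 2) :=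
  h_one_moves_eq_floor_general n hmod
end

section
/- The alternating configuration of 8 pegs can be sorted in 4 Berge 3-moves via the chain {9, 2, 7, 3, 9}: triple at 2 → 9, triple at 7 → 2, triple at 3 → 7, triple at 9 → 3. Hence h(8,3) = 4 = ⌈8/2⌉. -/
/-! ### Auxiliary definitions and lemmas -/

/-- The result of performing a Berge move. -/
def doMove (k : ℕ) (i j : ℤ) (c : ℤ → Option Bool) : ℤ → Option Bool :=
  fun p => if j ≤ p ∧ p < j + k then c (i + (p - j))
    else if i ≤ p ∧ p < i + k then none else c p

def cc1 : ℤ → Option Bool := doMove 3 2 9 (altConfig 8)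
def cc2 : ℤ → Option Bool := doMove 3 7 2 cc1
def cc3 : ℤ → Option Bool := doMove 3 3 7 cc2
def cc4 : ℤ → Option Bool := doMove 3 9 3 cc3

theorem cc1_none (p : ℤ) (h : p ≤ 0 ∨ 12 ≤ p) : cc1 p = none := by
  simp only [cc1, doMove, altConfig]; split_ifs <;> first | rfl | omega
theorem cc2_none (p : ℤ) (h : p ≤ 0 ∨ 12 ≤ p) : cc2 p = none := by
  simp only [cc2, doMove]; split_ifs <;> first | (exact cc1_none p h) | omega
theorem cc3_none (p : ℤ) (h : p ≤ 0 ∨ 12 ≤ p) : cc3 p = none := by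
  simp only [cc3, doMove]; split_ifs <;> first | (exact cc2_none p h) | omega
theorem cc4_none (p : ℤ) (h : p ≤ 0 ∨ 12 ≤ p) : cc4 p = none := by
  simp only [cc4, doMove]; split_ifs <;> first | (exact cc3_none p h) | omega

theorem cc4_eq (p : ℤ) : cc4 p =
    if 1 ≤ p ∧ p ≤ 4 then some true else if 5 ≤ p ∧ p ≤ 8 then some false else none := by
  rcases le_or_gt p 0 with h|h
  · rw [cc4_none p (Or.inl h)]; split_ifs <;> first | rfl | omega
  rcases le_or_gt 12 p with h2|h2
  · rw [cc4_none p (Or.inr h2)]; split_ifs <;> first | rfl | omega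
  · have h1 : 1 ≤ p := h
    have h3 : p ≤ 11 := by omega
    interval_cases p <;> decide

theorem cc4_sorted : IsSorted 8 cc4 := by
  refine ⟨1, true, ?_, ?_, ?_⟩
  · intro p
    rw [cc4_eq]
    split_ifs <;> simp <;> omega
  · intro p h1 h2
    rw [cc4_eq]
    have : p ≤ 4 := by norm_num at h2; omega
    split_ifs <;> first | rfl | omega
  · intro p h1 h2
    rw [cc4_eq]
    have h3 : 5 ≤ p := by norm_num at h1; omega
    have h4 : p ≤ 8 := by norm_num at h2; omega
    split_ifs <;> first | omega | rfl

theorem move1 : MoveTo 3 2 9 (altConfig 8) cc1 := by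
  refine ⟨by norm_num, ?_, rfl⟩
  intro t h1 h2
  have : t = 0 ∨ t = 1 ∨ t = 2 := by omega
  rcases this with rfl|rfl|rfl <;> exact ⟨by decide, by decide⟩

theorem move2 : MoveTo 3 7 2 cc1 cc2 := by
  refine ⟨by norm_num, ?_, rfl⟩
  intro t h1 h2
  have : t = 0 ∨ t = 1 ∨ t = 2 := by omega
  rcases this with rfl|rfl|rfl <;> exact ⟨by decide, by decide⟩

theorem move3 : MoveTo 3 3 7 cc2 cc3 := by
  refine ⟨by norm_num, ?_, rfl⟩
  intro t h1 h2
  have : t = 0 ∨ t = 1 ∨ t = 2 := by omega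
  rcases this with rfl|rfl|rfl <;> exact ⟨by decide, by decide⟩

theorem move4 : MoveTo 3 9 3 cc3 cc4 := by
  refine ⟨by norm_num, ?_, rfl⟩
  intro t h1 h2
  have : t = 0 ∨ t = 1 ∨ t = 2 := by omega
  rcases this with rfl|rfl|rfl <;> exact ⟨by decide, by decide⟩

/-- The set of "good" positions: peg whose right neighbor position holds a same-colored peg. -/
def goodSet (c : ℤ → Option Bool) : Set ℤ := {p | (c p).isSome ∧ c (p+1) = c p}

noncomputable def gcnt (c : ℤ → Option Bool) : ℕ := (goodSet c).ncard

theorem goodSet_sub_supp (c : ℤ → Option Bool) : goodSet c ⊆ {p : ℤ | (c p).isSome} :=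
  fun _ h => h.1

section
variable {i j : ℤ} {c c' : ℤ → Option Bool}

theorem move_eval_dest (h : MoveTo 3 i j c c') (p : ℤ) (h1 : j ≤ p) (h2 : p < j + 3) :
    c' p = c (i + (p - j)) := by
  simp only [h.2.2]
  split_ifs <;> first | rfl | (exfalso; push_cast at *; omega)

theorem move_eval_src (h : MoveTo 3 i j c c') (p : ℤ) (h1 : i ≤ p) (h2 : p < i + 3) :
    c' p = none := by
  have hd := h.1
  simp only [h.2.2]
  split_ifs <;> first | rfl | (exfalso; push_cast at *; omega)

theorem move_eval_other (h : MoveTo 3 i j c c') (p : ℤ) (h1 : p < j ∨ j + 3 ≤ p)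
    (h2 : p < i ∨ i + 3 ≤ p) : c' p = c p := by
  simp only [h.2.2]
  split_ifs <;> first | rfl | (exfalso; push_cast at *; omega)

theorem good_after (h : MoveTo 3 i j c c') (p : ℤ) (hp : p ∈ goodSet c') (hn1 : p ≠ j - 1)
    (hn2 : p ≠ j + 2) :
    (p = j ∧ i ∈ goodSet c) ∨ (p = j + 1 ∧ i + 1 ∈ goodSet c) ∨
    (p ≠ j ∧ p ≠ j + 1 ∧ p ∈ goodSet c) := by
  obtain ⟨hs, he⟩ := hp
  rcases eq_or_ne p j with rfl|hj
  · left
    refine ⟨rfl, ?_, ?_⟩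
    · have := move_eval_dest h p le_rfl (by omega)
      simp only [sub_self, add_zero] at this
      rwa [this] at hs
    · have e0 := move_eval_dest h p le_rfl (by omega)
      have e1 := move_eval_dest h (p+1) (by omega) (by omega)
      simp only [sub_self, add_zero] at e0
      have : p + 1 - p = 1 := by ring
      rw [this] at e1
      rw [e0, e1] at he
      exact he
  rcases eq_or_ne p (j+1) with rfl|hj1
  · right; left
    refine ⟨rfl, ?_, ?_⟩
    · have e0 := move_eval_dest h (j+1) (by omega) (by omega)
      have : j + 1 - j = 1 := by ring
      rw [this] at e0
      rwa [e0] at hs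
    · have e0 := move_eval_dest h (j+1) (by omega) (by omega)
      have e1 := move_eval_dest h (j+1+1) (by omega) (by omega)
      have r0 : j + 1 - j = 1 := by ring
      have r1 : j + 1 + 1 - j = 2 := by ring
      rw [r0] at e0; rw [r1] at e1
      rw [e0, e1] at he
      have : i + 2 = i + 1 + 1 := by ring
      rw [this] at he
      exact he
  · right; right
    refine ⟨hj, hj1, ?_, ?_⟩
    all_goals {
      have hout : p < j - 1 ∨ j + 3 ≤ p := by omega
      have hpd : p < j ∨ j + 3 ≤ p := by omega
      have hp1d : p + 1 < j ∨ j + 3 ≤ p + 1 := by omega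
      have hps : p < i ∨ i + 3 ≤ p := by
        by_contra hc
        push_neg at hc
        have := move_eval_src h p hc.1 hc.2
        rw [this] at hs; simp at hs
      have hp1s : p + 1 < i ∨ i + 3 ≤ p + 1 := by
        by_contra hc
        push_neg at hc
        have h0 := move_eval_src h (p+1) hc.1 hc.2
        rw [h0] at he
        rw [← he] at hs; simp at hs
      have ep := move_eval_other h p hpd hps
      have ep1 := move_eval_other h (p+1) hp1d hp1s
      first
        | (rw [ep] at hs; exact hs)
        | (rw [ep, ep1] at he; exact he)
    }

theorem finsupp_move (h : MoveTo 3 i j c c') (hc : FinSupp c) : FinSupp c' := by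
  apply Set.Finite.subset (hc.union (Set.finite_Ico j (j+3)))
  intro p hp
  simp only [Set.mem_setOf_eq] at hp
  rcases le_or_gt j p with h1 | h1
  · rcases lt_or_ge p (j+3) with h2 | h2
    · exact Or.inr ⟨h1, h2⟩
    · left
      rcases le_or_gt i p with h3 | h3
      · rcases lt_or_ge p (i+3) with h4 | h4
        · rw [move_eval_src h p h3 h4] at hp; simp at hp
        · rwa [move_eval_other h p (Or.inr h2) (Or.inr h4)] at hp
      · rwa [move_eval_other h p (Or.inr h2) (Or.inl h3)] at hp
  · left
    rcases le_or_gt i p with h3 | h3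
    · rcases lt_or_ge p (i+3) with h4 | h4
      · rw [move_eval_src h p h3 h4] at hp; simp at hp
      · rwa [move_eval_other h p (Or.inl h1) (Or.inr h4)] at hp
    · rwa [move_eval_other h p (Or.inl h1) (Or.inl h3)] at hp

theorem src_not_good (h : MoveTo 3 i j c c') (p : ℤ) (h1 : i ≤ p) (h2 : p < i + 3) :
    p ∉ goodSet c' := by
  intro hp
  obtain ⟨hs, -⟩ := hp
  rw [move_eval_src h p h1 h2] at hs
  simp at hs

theorem gcnt_move_le (h : MoveTo 3 i j c c') (hc : FinSupp c) : gcnt c' ≤ gcnt c + 2 := by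
  have hc' : FinSupp c' := finsupp_move h hc
  have hfin' : (goodSet c').Finite := hc'.subset (goodSet_sub_supp c')
  have hfin : (goodSet c).Finite := hc.subset (goodSet_sub_supp c)
  have hd := h.1
  push_cast at hd
  set φ : ℤ → ℤ := fun p => if p = j then i else if p = j + 1 then i + 1 else p with hφ
  have hmaps : ∀ p ∈ goodSet c' \ {j - 1, j + 2}, φ p ∈ goodSet c := by
    rintro p ⟨hp, hne⟩
    simp only [Set.mem_insert_iff, Set.mem_singleton_iff, not_or] at hne
    rcases good_after h p hp hne.1 hne.2 with ⟨rfl, hg⟩ | ⟨rfl, hg⟩ | ⟨hj, hj1, hg⟩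
    · simpa [hφ] using hg
    · have : j + 1 ≠ j := by omega
      simpa [hφ, this] using hg
    · simpa [hφ, hj, hj1] using hg
  have hinj : Set.InjOn φ (goodSet c' \ {j - 1, j + 2}) := by
    rintro p ⟨hp, _⟩ q ⟨hq, _⟩ hpq
    have hip : ∀ r ∈ goodSet c', r ≠ i ∧ r ≠ i + 1 := by
      intro r hr
      constructor
      · intro hri; rw [hri] at hr; exact src_not_good h i le_rfl (by omega) hr
      · intro hri; rw [hri] at hr; exact src_not_good h (i+1) (by omega) (by omega) hr
    have hp' := hip p hp
    have hq' := hip q hq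
    simp only [hφ] at hpq
    split_ifs at hpq <;> omega
  have h1 : goodSet c' ⊆ (goodSet c' \ {j - 1, j + 2}) ∪ {j - 1, j + 2} := by
    intro p hp
    by_cases hmem : p ∈ ({j - 1, j + 2} : Set ℤ)
    · exact Or.inr hmem
    · exact Or.inl ⟨hp, hmem⟩
  calc gcnt c' = (goodSet c').ncard := rfl
    _ ≤ ((goodSet c' \ {j - 1, j + 2}) ∪ {j - 1, j + 2}).ncard :=
        Set.ncard_le_ncard h1 ((hfin'.diff).union ((Set.finite_singleton _).insert _))
    _ ≤ (goodSet c' \ {j - 1, j + 2}).ncard + ({j - 1, j + 2} : Set ℤ).ncard :=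
        Set.ncard_union_le _ _
    _ ≤ (goodSet c).ncard + 2 := by
        refine add_le_add (Set.ncard_le_ncard_of_injOn φ hmaps hinj hfin) ?_
        refine le_trans (Set.ncard_insert_le _ _) ?_
        simp [Set.ncard_singleton]
    _ = gcnt c + 2 := rfl

theorem good_alt : goodSet (altConfig 8) = ∅ := by
  ext p
  simp only [Set.mem_empty_iff_false, iff_false, goodSet, Set.mem_setOf_eq, not_and]
  intro hs he
  simp only [altConfig] at hs he
  split_ifs at he with h1 h2 <;> split_ifs at hs <;> simp_all <;> omega

theorem gcnt_first (h : MoveTo 3 i j (altConfig 8) c') : gcnt c' ≤ 1 := by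
  have hgood : ∀ p ∈ goodSet c', p = j - 1 ∨ p = j + 2 := by
    intro p hp
    by_contra hcon
    push_neg at hcon
    rcases good_after h p hp hcon.1 hcon.2 with ⟨_, hg⟩ | ⟨_, hg⟩ | ⟨_, _, hg⟩ <;>
      · rw [good_alt] at hg; exact hg
  have hdest : j ≤ 0 ∨ 9 ≤ j := by
    have h0 := (h.2.1 0 le_rfl (by norm_num)).2
    simp only [add_zero, altConfig] at h0
    by_contra hcon
    push_neg at hcon
    rw [if_pos (by push_cast; omega : (1:ℤ) ≤ j ∧ j ≤ ((8:ℕ):ℤ))] at h0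
    exact absurd h0 (by simp)
  have none_out : ∀ p : ℤ, (p < j ∨ j + 3 ≤ p) → (p ≤ 0 ∨ 9 ≤ p) → c' p = none := by
    intro p hpd hpr
    rcases le_or_gt i p with h3 | h3
    · rcases lt_or_ge p (i+3) with h4 | h4
      · exact move_eval_src h p h3 h4
      · rw [move_eval_other h p hpd (Or.inr h4)]
        simp only [altConfig]
        rw [if_neg (by push_cast; omega)]
    · rw [move_eval_other h p hpd (Or.inl h3)]
      simp only [altConfig]
      rw [if_neg (by push_cast; omega)]
  rcases hdest with hj | hj
  · have hsub : goodSet c' ⊆ {j + 2} := by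
      intro p hp
      rcases hgood p hp with rfl | rfl
      · exfalso
        obtain ⟨hs, -⟩ := hp
        rw [none_out (j-1) (Or.inl (by omega)) (Or.inl (by omega))] at hs
        simp at hs
      · rfl
    calc gcnt c' ≤ ({j + 2} : Set ℤ).ncard :=
          Set.ncard_le_ncard hsub (Set.finite_singleton _)
      _ = 1 := Set.ncard_singleton _
  · have hsub : goodSet c' ⊆ {j - 1} := by
      intro p hp
      rcases hgood p hp with rfl | rfl
      · rfl
      · exfalso
        obtain ⟨hs, he⟩ := hp
        rw [none_out (j+2+1) (Or.inr (by omega)) (Or.inr (by omega))] at he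
        rw [← he] at hs
        simp at hs
    calc gcnt c' ≤ ({j - 1} : Set ℤ).ncard :=
          Set.ncard_le_ncard hsub (Set.finite_singleton _)
      _ = 1 := Set.ncard_singleton _

end

theorem sorted_ge (c : ℤ → Option Bool) (hs : IsSorted 8 c) : 6 ≤ gcnt c := by
  obtain ⟨j, w, hiff, hw, hb⟩ := hs
  have e : (((8:ℕ) + 1) / 2 : ℕ) = 4 := by norm_num
  rw [e] at hw hb
  push_cast at hw hb hiff
  have hfin : (goodSet c).Finite := by
    apply Set.Finite.subset (Set.finite_Ico j (j+8))
    intro p hp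
    have := (hiff p).mp hp.1
    exact ⟨this.1, this.2⟩
  have hval : ∀ a : ℤ, a ∈ ({0, 1, 2, 4, 5, 6} : Set ℤ) → j + a ∈ goodSet c := by
    intro a ha
    simp only [Set.mem_insert_iff, Set.mem_singleton_iff] at ha
    rcases ha with rfl|rfl|rfl|rfl|rfl|rfl
    · exact ⟨by rw [hw (j+0) (by omega) (by omega)]; rfl,
        by rw [hw (j+0+1) (by omega) (by omega), hw (j+0) (by omega) (by omega)]⟩
    · exact ⟨by rw [hw (j+1) (by omega) (by omega)]; rfl,
        by rw [hw (j+1+1) (by omega) (by omega), hw (j+1) (by omega) (by omega)]⟩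
    · exact ⟨by rw [hw (j+2) (by omega) (by omega)]; rfl,
        by rw [hw (j+2+1) (by omega) (by omega), hw (j+2) (by omega) (by omega)]⟩
    · exact ⟨by rw [hb (j+4) (by omega) (by omega)]; rfl,
        by rw [hb (j+4+1) (by omega) (by omega), hb (j+4) (by omega) (by omega)]⟩
    · exact ⟨by rw [hb (j+5) (by omega) (by omega)]; rfl,
        by rw [hb (j+5+1) (by omega) (by omega), hb (j+5) (by omega) (by omega)]⟩
    · exact ⟨by rw [hb (j+6) (by omega) (by omega)]; rfl,
        by rw [hb (j+6+1) (by omega) (by omega), hb (j+6) (by omega) (by omega)]⟩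
  have h6 : ({0, 1, 2, 4, 5, 6} : Set ℤ).ncard = 6 := by
    have : ({0, 1, 2, 4, 5, 6} : Set ℤ) = (↑({0, 1, 2, 4, 5, 6} : Finset ℤ) : Set ℤ) := by
      simp
    rw [this, Set.ncard_coe_finset]
    decide
  calc (6:ℕ) = ({0, 1, 2, 4, 5, 6} : Set ℤ).ncard := h6.symm
    _ ≤ (goodSet c).ncard :=
        Set.ncard_le_ncard_of_injOn (fun a => j + a) hval
          (fun x _ y _ hxy => by exact add_left_cancel hxy) hfin
    _ = gcnt c := rfl

theorem finsupp_alt : FinSupp (altConfig 8) := by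
  apply Set.Finite.subset (Set.finite_Icc (1:ℤ) 8)
  intro p hp
  simp only [Set.mem_setOf_eq, altConfig] at hp
  split_ifs at hp with hin
  · push_cast at hin; exact ⟨hin.1, hin.2⟩
  · simp at hp

theorem lower_bound (m : ℕ) (hm : SortsIn 3 8 m) : 4 ≤ m := by
  obtain ⟨f, hf0, hstep, hsort⟩ := hm
  by_contra hlt
  push_neg at hlt
  have h6 : 6 ≤ gcnt (f m) := sorted_ge _ hsort
  rcases Nat.eq_zero_or_pos m with rfl | hpos
  · rw [hf0] at h6
    have : gcnt (altConfig 8) = 0 := by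
      simp only [gcnt, good_alt, Set.ncard_empty]
    omega
  -- m ≥ 1
  have hfirst : gcnt (f 1) ≤ 1 := by
    obtain ⟨i, j, hmv⟩ := hstep 0 hpos
    rw [hf0] at hmv
    exact gcnt_first hmv
  have hfinsupp : ∀ t : ℕ, t ≤ m → FinSupp (f t) := by
    intro t
    induction t with
    | zero => intro _; rw [hf0]; exact finsupp_alt
    | succ n ih =>
        intro hn
        obtain ⟨i, j, hmv⟩ := hstep n (by omega)
        exact finsupp_move hmv (ih (by omega))
  have hstep2 : ∀ t : ℕ, t + 1 ≤ m → gcnt (f (t+1)) ≤ gcnt (f t) + 2 := by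
    intro t ht
    obtain ⟨i, j, hmv⟩ := hstep t (by omega)
    exact gcnt_move_le hmv (hfinsupp t (by omega))
  interval_cases m
  · omega
  · have h1 := hstep2 1 (by omega)
    norm_num at h1
    omega
  · have h1 := hstep2 1 (by omega)
    have h2 := hstep2 2 (by omega)
    norm_num at h1 h2
    omega

theorem sort_eight_pegs_three_moves :
    (∃ c₁ c₂ c₃ c₄ : ℤ → Option Bool,
      MoveTo 3 2 9 (altConfig 8) c₁ ∧ MoveTo 3 7 2 c₁ c₂ ∧ MoveTo 3 3 7 c₂ c₃ ∧
      MoveTo 3 9 3 c₃ c₄ ∧ IsSorted 8 c₄) ∧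
    IsLeast {m : ℕ | SortsIn 3 8 m} 4 := by
  constructor
  · exact ⟨cc1, cc2, cc3, cc4, move1, move2, move3, move4, cc4_sorted⟩
  constructor
  · -- SortsIn 3 8 4
    refine ⟨fun n => match n with
      | 0 => altConfig 8
      | 1 => cc1
      | 2 => cc2
      | 3 => cc3
      | _ => cc4, rfl, ?_, cc4_sorted⟩
    intro i hi
    interval_cases i
    · exact ⟨2, 9, move1⟩
    · exact ⟨7, 2, move2⟩
    · exact ⟨3, 7, move3⟩
    · exact ⟨9, 3, move4⟩
  · intro m hm
    exact lower_bound m hm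
end
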